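/- arXiv:1905.07483 — 3 statements merged into one kernel-verified Lean document; each statement's English description precedes it below -/
import Mathlib

section
/- There exists a subset R ⊆ V with |R| ≤ (n/⌈√n⌉)·ln n + 1 (as real numbers) such that for every long triple (s,t,e) there exists a replacement path for (s,t,e) whose detour part contains at least one vertex of R. -/
/-!
A shortest path has no repeated vertex, so the detour of a replacement path for a long triple
has more than `⌈√n⌉` distinct vertices. For `N` sets of size at least `m` in an `n`-element
universe, double counting gives a vertex lying in at least an `m / n` fraction of them, so
choosing `r` such vertices greedily leaves at most `N (1 - m/n)^r ≤ N e^{-rm/n}` sets unhit,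
and this is `< 1` once `r > (n/m) ln N`. There are `N ≤ k < n` long triples.
-/

open scoped ENat ENNReal

namespace RP

variable {V : Type*}

/-- `p` is a walk from `u` to `w` in the graph with edge relation `E`:
a nonempty list of vertices, consecutive vertices joined by edges. -/
def IsWalk (E : V → V → Prop) (p : List V) (u w : V) : Prop :=
  p ≠ [] ∧ p.head? = some u ∧ p.getLast? = some w ∧ p.Chain' E

/-- The number of edges of a path given as a list of vertices. -/
def pathLen (p : List V) : ℕ := p.length - 1

/-- Unweighted distance: minimum number of edges of a `u`-to-`w` path (`⊤` if none). -/
noncomputable def dist (E : V → V → Prop) (u w : V) : ℕ∞ :=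
  sInf ((fun p => (pathLen p : ℕ∞)) '' {p | IsWalk E p u w})

/-- Total weight of a path, for edge weights `w`. -/
def wt (w : V → V → ℝ) : List V → ℝ
  | [] => 0
  | [_] => 0
  | a :: b :: rest => w a b + wt w (b :: rest)

/-- Weighted distance: infimum of path weights (`⊤` if there is no path). -/
noncomputable def wdist (E : V → V → Prop) (w : V → V → ℝ) (u x : V) : ℝ≥0∞ :=
  sInf ((fun p => ENNReal.ofReal (wt w p)) '' {p | IsWalk E p u x})

/-- `G' = G ∖ E(P)`: the edge relation of `G` with all edges of the path
`P = ⟨v 0, …, v k⟩` removed. -/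
def Eres (E : V → V → Prop) (v : ℕ → V) (k : ℕ) : V → V → Prop :=
  fun a b => E a b ∧ ¬∃ i, i < k ∧ a = v i ∧ b = v (i + 1)

/-- `G ∖ {e}` where `e = (v a, v (a+1))` is an edge of `P`. -/
def Edel (E : V → V → Prop) (v : ℕ → V) (a : ℕ) : V → V → Prop :=
  fun x y => E x y ∧ ¬(x = v a ∧ y = v (a + 1))

/-- `x` lies on the path `P = ⟨v 0, …, v k⟩`. -/
def onPath (v : ℕ → V) (k : ℕ) (x : V) : Prop := ∃ i ≤ k, x = v i

/-- `Q` decomposes as `⟨v 0, …, v i⟩ ∘ D ∘ ⟨v j, …, v k⟩` where the detour `D` starts at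
`v i`, ends at `v j`, and meets `P` only in its first and last vertices. -/
def Detoured (v : ℕ → V) (k : ℕ) (Q D : List V) : Prop :=
  ∃ i j, i ≤ k ∧ j ≤ k ∧
    Q = ((List.range i).map v) ++ D ++ ((List.range' (j + 1) (k - j)).map v) ∧
    D.head? = some (v i) ∧ D.getLast? = some (v j) ∧
    ∀ x ∈ D, onPath v k x → x = v i ∨ x = v j

/-- `Q` is a replacement path for the triple `(s, t, e)` with `e = (v a, v (a+1))`:
a shortest `s`-to-`t` path in `G ∖ {e}`. -/
def IsRP (E : V → V → Prop) (v : ℕ → V) (s t : V) (a : ℕ) (Q : List V) : Prop :=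
  IsWalk (Edel E v a) Q s t ∧ (pathLen Q : ℕ∞) = dist (Edel E v a) s t

/-- The triple `(s, t, e)` with `e = (v a, v (a+1))` is *long*: a replacement path exists and
every replacement path has its detour part containing more than `sqn` edges. -/
def LongTriple (E : V → V → Prop) (v : ℕ → V) (k : ℕ) (s t : V) (sqn a : ℕ) : Prop :=
  (∃ Q, IsRP E v s t a Q) ∧
    ∀ Q D, IsRP E v s t a Q → Detoured v k Q D → sqn < pathLen D

/-- `V_{√n}`: vertices `x` having an index `i ≤ k` with `d_{G'}(v i, x) = sqn` and
`d_{G'}(v j, x) > sqn` for all `j < i` (such an `i` is exactly `ρ(x)`). -/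
def Vsqrt (E : V → V → Prop) (v : ℕ → V) (k sqn : ℕ) : Set V :=
  {x | ∃ i ≤ k, dist (Eres E v k) (v i) x = (sqn : ℕ∞) ∧
      ∀ j < i, (sqn : ℕ∞) < dist (Eres E v k) (v j) x}

/-- The set of vertices `v (i+1), …, v k` deleted from `G^w` to form `G^w_i`. -/
def delVerts (v : ℕ → V) (k i : ℕ) (x : V) : Prop := ∃ l, i < l ∧ l ≤ k ∧ x = v l

/-- Edge relation of `G^w_i`: `G` with the vertices `v (i+1), …, v k` deleted. -/
def Ei (E : V → V → Prop) (v : ℕ → V) (k i : ℕ) : V → V → Prop :=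
  fun a b => E a b ∧ ¬delVerts v k i a ∧ ¬delVerts v k i b

open Classical in
/-- Weights of `G^w`: `ε` on the edges of `P`, `1` on every other edge. -/
noncomputable def wP (v : ℕ → V) (k : ℕ) (ε : ℝ) : V → V → ℝ :=
  fun a b => if ∃ i, i < k ∧ a = v i ∧ b = v (i + 1) then ε else 1

end RP

theorem List.IsChain.exists_nodup_sublist {α : Type*} {R : α → α → Prop} :
    ∀ {p : List α}, p.IsChain R →
      ∃ q : List α, q.Sublist p ∧ q.Nodup ∧ q.IsChain R ∧ q.head? = p.head? ∧
        q.getLast? = p.getLast?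
  | [], _ => ⟨[], List.Sublist.slnil, List.nodup_nil, List.IsChain.nil, rfl, rfl⟩
  | a :: rest, hp => by
    obtain ⟨hhead, hrest⟩ := List.isChain_cons.mp hp
    obtain ⟨q, hsub, hnd, hch, hqhead, hqlast⟩ := hrest.exists_nodup_sublist
    by_cases ha : a ∈ q
    · -- `q` passes through `a` again: keep only its part from `a` on
      obtain ⟨l₁, l₂, rfl⟩ := List.append_of_mem ha
      have hsuffix : a :: l₂ <:+ l₁ ++ a :: l₂ := List.suffix_append _ _
      refine ⟨a :: l₂, ?_, hnd.sublist hsuffix.sublist, hch.suffix hsuffix, rfl, ?_⟩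
      · exact ((List.sublist_cons_self a l₂).trans hsuffix.sublist |>.trans hsub).cons_cons a
      · simp [List.getLast?_cons, ← hqlast]
    · refine ⟨a :: q, hsub.cons_cons a, List.nodup_cons.mpr ⟨ha, hnd⟩,
        hch.cons (hqhead ▸ hhead), rfl, ?_⟩
      simp [List.getLast?_cons, hqlast]

namespace RP

variable {V : Type*} {E : V → V → Prop} {v : ℕ → V} {k : ℕ} {s t : V}

theorem Detoured.sublist {Q D : List V} (h : Detoured v k Q D) : D.Sublist Q := by
  obtain ⟨i, j, -, -, rfl, -⟩ := h
  exact (List.sublist_append_right _ D).trans (List.sublist_append_left _ _)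

theorem IsWalk.nodup_of_pathLen_le_dist {p : List V} {u w : V} (hp : IsWalk E p u w)
    (hshort : (pathLen p : ℕ∞) ≤ dist E u w) : p.Nodup := by
  obtain ⟨hne, hhead, hlast, hchain⟩ := hp
  obtain ⟨q, hsub, hnd, hqchain, hqhead, hqlast⟩ := hchain.exists_nodup_sublist
  have hq : IsWalk E q u w :=
    ⟨by rintro rfl; simp_all, hqhead ▸ hhead, hqlast ▸ hlast, hqchain⟩
  have hle : pathLen p ≤ pathLen q := by
    exact_mod_cast hshort.trans (sInf_le ⟨q, hq, rfl⟩ : dist E u w ≤ pathLen q)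
  have hpos : 0 < q.length := List.length_pos_iff.mpr hq.1
  have hlen : q.length = p.length := by
    have := hsub.length_le
    unfold pathLen at hle
    omega
  exact hsub.eq_of_length hlen ▸ hnd

theorem IsRP.nodup {a : ℕ} {Q : List V} (hQ : IsRP E v s t a Q) : Q.Nodup :=
  hQ.1.nodup_of_pathLen_le_dist hQ.2.le

theorem LongTriple.exists_detour_lt_card [DecidableEq V] {sqn a : ℕ} (hlong : LongTriple E v k s t sqn a)
    (hdecomp : ∀ Q, IsRP E v s t a Q → ∃ D, Detoured v k Q D) :
    ∃ Q D, IsRP E v s t a Q ∧ Detoured v k Q D ∧ sqn < D.toFinset.card := by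
  obtain ⟨Q, hQ⟩ := hlong.1
  obtain ⟨D, hD⟩ := hdecomp Q hQ
  have hlen := hlong.2 Q D hQ hD
  rw [pathLen] at hlen
  refine ⟨Q, D, hQ, hD, ?_⟩
  rw [List.toFinset_card_of_nodup (hQ.nodup.sublist hD.sublist)]
  omega

end RP

theorem mul_one_sub_pow_lt_one {N x : ℝ} {r : ℕ} (hN : 0 < N) (hx : x ≤ 1)
    (hr : Real.log N < r * x) : N * (1 - x) ^ r < 1 :=
  calc N * (1 - x) ^ r ≤ N * Real.exp (-x) ^ r := by
        gcongr
        exact Real.one_sub_le_exp_neg x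
    _ = N * Real.exp (-(r * x)) := by rw [← Real.exp_nat_mul, mul_neg]
    _ < N * Real.exp (-Real.log N) := by gcongr
    _ = 1 := by rw [Real.exp_neg, Real.exp_log hN, mul_inv_cancel₀ hN.ne']

section HittingSet

open Finset

variable {ι V : Type*} [Fintype V] [DecidableEq V] (S : ι → Finset V) {m : ℕ}

theorem exists_card_mul_le_card_filter_mem [Nonempty V] (U : Finset ι)
    (hS : ∀ i ∈ U, m ≤ #(S i)) :
    ∃ x, #U * m ≤ Fintype.card V * #{i ∈ U | x ∈ S i} := by
  have hcount : ∑ x, #{i ∈ U | x ∈ S i} = ∑ i ∈ U, #(S i) := by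
    simpa [bipartiteAbove, bipartiteBelow] using
      sum_card_bipartiteAbove_eq_sum_card_bipartiteBelow (fun x i => x ∈ S i) (s := univ) (t := U)
  obtain ⟨x, -, hx⟩ := exists_le_of_sum_le (s := univ) (f := fun _ => #U * m)
    (g := fun x => Fintype.card V * #{i ∈ U | x ∈ S i}) univ_nonempty <| by
      simp only [sum_const, card_univ, smul_eq_mul, ← mul_sum, hcount]
      exact Nat.mul_le_mul_left _ (card_nsmul_le_sum U _ m hS)
  exact ⟨x, hx⟩

theorem exists_card_le_card_filter_disjoint_le (I : Finset ι) (hS : ∀ i ∈ I, m ≤ #(S i))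
    (hm : 0 < m) (hmV : m ≤ Fintype.card V) (r : ℕ) :
    ∃ R : Finset V, #R ≤ r ∧
      (#{i ∈ I | Disjoint R (S i)} : ℝ) ≤ #I * (1 - m / Fintype.card V) ^ r := by
  have : Nonempty V := Fintype.card_pos_iff.mp (hm.trans_le hmV)
  have hn : (0 : ℝ) < Fintype.card V := by exact_mod_cast Fintype.card_pos
  induction r with
  | zero => exact ⟨∅, le_rfl, by simp⟩
  | succ r ih =>
    obtain ⟨R, hR, hunhit⟩ := ih
    set U := {i ∈ I | Disjoint R (S i)}
    obtain ⟨x, hx⟩ :=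
      exists_card_mul_le_card_filter_mem S U fun i hi => hS i (mem_filter.mp hi).1
    have hsplit := card_filter_add_card_filter_not (s := U) (x ∈ S ·)
    have hinsert : {i ∈ I | Disjoint (insert x R) (S i)} = {i ∈ U | x ∉ S i} := by
      simp only [U, filter_filter, disjoint_insert_left, and_comm]
    refine ⟨insert x R, (card_insert_le x R).trans (by omega), ?_⟩
    rw [hinsert]
    have hx' : (#U * m : ℝ) ≤ Fintype.card V * #{i ∈ U | x ∈ S i} := by exact_mod_cast hx
    have hfac : (0 : ℝ) ≤ 1 - m / Fintype.card V := by
      rw [sub_nonneg, div_le_one hn]; exact_mod_cast hmV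
    have hmiss : (#{i ∈ U | x ∉ S i} : ℝ) = #U - #{i ∈ U | x ∈ S i} := by
      rw [← hsplit]; push_cast; ring
    have hhit : (#U : ℝ) * m / Fintype.card V ≤ #{i ∈ U | x ∈ S i} := by
      rw [div_le_iff₀ hn]; linarith
    calc (#{i ∈ U | x ∉ S i} : ℝ) ≤ #U * (1 - m / Fintype.card V) := by
          rw [hmiss, mul_sub, mul_one, ← mul_div_assoc]; linarith
      _ ≤ #I * (1 - m / Fintype.card V) ^ r * (1 - m / Fintype.card V) := by gcongr
      _ = #I * (1 - m / Fintype.card V) ^ (r + 1) := by ring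

theorem exists_hitting_set (I : Finset ι) (hm : 0 < m) (hS : ∀ i ∈ I, m ≤ #(S i)) :
    ∃ R : Finset V, (#R : ℝ) ≤ Fintype.card V / m * Real.log #I + 1 ∧
      ∀ i ∈ I, ∃ x ∈ R, x ∈ S i := by
  obtain rfl | ⟨i₀, hi₀⟩ := I.eq_empty_or_nonempty
  · exact ⟨∅, by simp, by simp⟩
  have hmV : m ≤ Fintype.card V := (hS i₀ hi₀).trans (card_le_univ _)
  have hn : (0 : ℝ) < Fintype.card V := by exact_mod_cast hm.trans_le hmV
  set c := Fintype.card V / m * Real.log #I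
  obtain ⟨R, hR, hunhit⟩ :=
    exists_card_le_card_filter_disjoint_le S I hS hm hmV (⌊c⌋₊ + 1)
  have hc : 0 ≤ c := by positivity
  have hlt : (#{i ∈ I | Disjoint R (S i)} : ℝ) < 1 := by
    refine hunhit.trans_lt <|
      mul_one_sub_pow_lt_one (Nat.cast_pos.mpr (card_pos.mpr ⟨i₀, hi₀⟩)) ?_ ?_
    · rw [div_le_one hn]; exact_mod_cast hmV
    · calc Real.log #I = c * (m / Fintype.card V) := by
            simp only [c]; field_simp
        _ < (⌊c⌋₊ + 1 : ℕ) * (m / Fintype.card V) := by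
            gcongr
            push_cast
            exact Nat.lt_floor_add_one c
  refine ⟨R, ?_, fun i hi => ?_⟩
  · calc (#R : ℝ) ≤ (⌊c⌋₊ + 1 : ℕ) := by exact_mod_cast hR
      _ ≤ c + 1 := by push_cast; gcongr; exact Nat.floor_le hc
  · have hempty : {i ∈ I | Disjoint R (S i)} = ∅ := by
      rw [← card_eq_zero]; exact_mod_cast Nat.lt_one_iff.mp (by exact_mod_cast hlt)
    exact not_disjoint_iff.mp (filter_eq_empty_iff.mp hempty hi)

end HittingSet

theorem stmt3_general {V : Type*} [Fintype V]
    (E : V → V → Prop) (n k : ℕ) (hn : Fintype.card V = n)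
    (v : ℕ → V) (s t : V)
    (hPwalk : RP.IsWalk E ((List.range (k + 1)).map v) s t)
    (hPshort : RP.dist E s t = (k : ℕ∞))
    (sqn : ℕ) (hsqn : sqn = ⌈Real.sqrt n⌉₊)
    (hDecomp : ∀ a < k, ∀ Q, RP.IsRP E v s t a Q → ∃ Dt, RP.Detoured v k Q Dt) :
    ∃ R : Finset V, (R.card : ℝ) ≤ ((n : ℝ) / (sqn : ℝ)) * Real.log n + 1 ∧
      ∀ a < k, RP.LongTriple E v k s t sqn a →
        ∃ Q Dt : List V, RP.IsRP E v s t a Q ∧ RP.Detoured v k Q Dt ∧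
          ∃ x ∈ R, x ∈ Dt := by
  classical
  have hn₀ : 0 < n := hn ▸ Fintype.card_pos_iff.mpr ⟨s⟩
  have hsqn₀ : 0 < sqn := hsqn ▸ Nat.ceil_pos.mpr (Real.sqrt_pos.mpr (by exact_mod_cast hn₀))
  have hkn : k < n := by
    have hP := hPwalk.nodup_of_pathLen_le_dist (by simp [RP.pathLen, hPshort])
    simpa [← hn] using hP.length_le_card
  set I := (Finset.range k).filter (RP.LongTriple E v k s t sqn)
  have hdetour : ∀ a ∈ I, ∃ Q D : List V, RP.IsRP E v s t a Q ∧
      RP.Detoured v k Q D ∧ sqn < D.toFinset.card := fun a ha =>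
    (Finset.mem_filter.mp ha).2.exists_detour_lt_card
      (hDecomp a (Finset.mem_range.mp (Finset.mem_filter.mp ha).1))
  choose! Q D hQD using hdetour
  obtain ⟨R, hRcard, hRhit⟩ := exists_hitting_set (fun a => (D a).toFinset) I hsqn₀
    fun a ha => (hQD a ha).2.2.le
  refine ⟨R, ?_, fun a hak hlong => ?_⟩
  · have hIn : I.card ≤ n := (Finset.card_filter_le _ _).trans (by simpa using hkn.le)
    have hI : Real.log I.card ≤ Real.log n := by
      rcases Nat.eq_zero_or_pos I.card with h | h
      · simpa [h] using Real.log_natCast_nonneg n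
      · exact Real.log_le_log (by exact_mod_cast h) (by exact_mod_cast hIn)
    calc (R.card : ℝ) ≤ n / sqn * Real.log I.card + 1 := hn ▸ hRcard
      _ ≤ n / sqn * Real.log n + 1 := by gcongr
  · have ha : a ∈ I := Finset.mem_filter.mpr ⟨Finset.mem_range.mpr hak, hlong⟩
    obtain ⟨x, hxR, hx⟩ := hRhit a ha
    exact ⟨Q a, D a, (hQD a ha).1, (hQD a ha).2.1, x, hxR, List.mem_toFinset.mp hx⟩

/-- There is a set `R ⊆ V` with `|R| ≤ (n/⌈√n⌉)·ln n + 1` such that for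
every long triple `(s,t,e)` some replacement path for `(s,t,e)` has its detour part containing
a vertex of `R`. -/
theorem stmt3 {V : Type*} [Fintype V] [DecidableEq V]
    (E : V → V → Prop) (n k : ℕ) (hn : Fintype.card V = n)
    (v : ℕ → V) (s t : V) (hs : v 0 = s) (ht : v k = t)
    (hPwalk : RP.IsWalk E ((List.range (k + 1)).map v) s t)
    (hPshort : RP.dist E s t = (k : ℕ∞))
    (sqn : ℕ) (hsqn : sqn = ⌈Real.sqrt n⌉₊)
    (hDecomp : ∀ a < k, ∀ Q, RP.IsRP E v s t a Q → ∃ Dt, RP.Detoured v k Q Dt) :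
    ∃ R : Finset V, (R.card : ℝ) ≤ ((n : ℝ) / (sqn : ℝ)) * Real.log n + 1 ∧
      ∀ a < k, RP.LongTriple E v k s t sqn a →
        ∃ Q Dt : List V, RP.IsRP E v s t a Q ∧ RP.Detoured v k Q Dt ∧
          ∃ x ∈ R, x ∈ Dt :=
  stmt3_general E n k hn v s t hPwalk hPshort sqn hsqn hDecomp
end

section
/- Let (s,t,e) be a long triple, and let Q be a replacement path for (s,t,e) written as Q = ⟨v_0,…,v_j⟩ ∘ Detour ∘ Suffix, where Detour is a path starting at v_j that intersects P only in its first and last vertices and contains more than ⌈√n⌉ edges, and Suffix is the remaining portion of Q ending at t. Let x be the vertex of Detour reached after exactly ⌈√n⌉ edges from v_j (the (⌈√n⌉+1)-th vertex along Detour). Then d_{G'}(v_j, x) = ⌈√n⌉, x ∈ V_{√n}, and j = ρ(x). -/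
/-
The first `⌈√n⌉` edges of the detour avoid `P`, since an edge of `P` ends on `P` and the detour
meets `P` only at its ends; this gives `d_{G'}(v_j, x) ≤ ⌈√n⌉`. Conversely, for `i ≤ j` and any
`G'`-path `R` from `v_i` to `x`, the walk `⟨v_0, …, v_i⟩ ∘ R ∘ Q[x..t]` avoids `e ∈ P`; as `Q` is
shortest and reaches `x` after `j + ⌈√n⌉` edges, `i + |R| ≥ j + ⌈√n⌉`. Taking `i = j` gives the
lower bound, and `i < j` gives `d_{G'}(v_i, x) > ⌈√n⌉`.
-/

open scoped ENat ENNReal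

namespace RP

section Walks

variable {V : Type*} {E E' : V → V → Prop} {p q : List V} {u w y z : V}

lemma dist_le_pathLen (hp : IsWalk E p u w) : dist E u w ≤ pathLen p :=
  sInf_le ⟨p, hp, rfl⟩

lemma le_dist {m : ℕ} (h : ∀ p, IsWalk E p u w → m ≤ pathLen p) : (m : ℕ∞) ≤ dist E u w :=
  le_sInf <| by
    rintro _ ⟨p, hp, rfl⟩
    exact Nat.cast_le.mpr (h p hp)

lemma isWalk_singleton (u : V) : IsWalk E [u] u u :=
  ⟨List.cons_ne_nil _ _, rfl, rfl, List.isChain_singleton u⟩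

lemma IsWalk.mono (hEE' : ∀ x y, E x y → E' x y) (hp : IsWalk E p u w) : IsWalk E' p u w :=
  ⟨hp.1, hp.2.1, hp.2.2.1, (hp.2.2.2 : p.IsChain E).imp fun _ _ h => hEE' _ _ h⟩

lemma IsWalk.append (hp : IsWalk E p u w) (hq : IsWalk E q w z) :
    IsWalk E (p ++ q.tail) u z := by
  obtain ⟨hp0, hpu, hpw, hpc⟩ := hp
  obtain ⟨hq0, hqw, hqz, hqc⟩ := hq
  obtain ⟨b, q, rfl⟩ := List.exists_cons_of_ne_nil hq0
  obtain rfl : b = w := by simpa using hqw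
  refine ⟨by simp [hp0], by simp [List.head?_append, hpu], ?_, ?_⟩
  · rw [List.getLast?_cons, Option.some_inj] at hqz
    cases hq : q.getLast? <;> simp_all [List.getLast?_append]
  · have hqc : (b :: q).IsChain E := hqc
    rw [List.isChain_cons] at hqc
    exact (hpc : p.IsChain E).append hqc.2 (by simp_all)

lemma isWalk_take {m : ℕ} (hc : (p.take (m + 1)).IsChain E) (hu : p.head? = some u)
    (hy : p[m]? = some y) : IsWalk E (p.take (m + 1)) u y := by
  have hm : m < p.length := (List.getElem?_eq_some_iff.mp hy).1
  refine ⟨List.ne_nil_of_length_pos (by simp; omega), by simpa [List.head?_take] using hu, ?_, hc⟩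
  rw [List.getLast?_eq_getElem?, List.getElem?_take]
  simpa [show min (m + 1) p.length - 1 = m by omega] using hy

lemma IsWalk.take {m : ℕ} (hp : IsWalk E p u w) (hy : p[m]? = some y) :
    IsWalk E (p.take (m + 1)) u y :=
  isWalk_take ((hp.2.2.2 : p.IsChain E).take _) hp.2.1 hy

lemma IsWalk.drop {m : ℕ} (hp : IsWalk E p u w) (hy : p[m]? = some y) :
    IsWalk E (p.drop m) y w := by
  have hm : m < p.length := (List.getElem?_eq_some_iff.mp hy).1
  refine ⟨List.ne_nil_of_length_pos (by simp; omega), by simpa [List.head?_drop] using hy, ?_,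
    (hp.2.2.2 : p.IsChain E).drop m⟩
  rw [List.getLast?_drop, if_neg (by omega)]
  exact hp.2.2.1

lemma IsWalk.le_add_pathLen_of_shortest {i m : ℕ} (hp : IsWalk E p u w)
    (hd : (pathLen p : ℕ∞) = dist E u w) (hy : p[i]? = some y) (hz : p[m]? = some z)
    (hq : IsWalk E q y z) : m ≤ i + pathLen q := by
  have hi : i < p.length := (List.getElem?_eq_some_iff.mp hy).1
  have hm : m < p.length := (List.getElem?_eq_some_iff.mp hz).1
  have hshort := dist_le_pathLen (((hp.take hy).append hq).append (hp.drop hz))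
  rw [← hd, Nat.cast_le] at hshort
  simp only [pathLen, List.length_append, List.length_tail, List.length_take,
    List.length_drop] at hshort ⊢
  omega

lemma IsWalk.nodup_of_shortest (hp : IsWalk E p u w) (hd : (pathLen p : ℕ∞) = dist E u w) :
    p.Nodup := by
  rw [List.nodup_iff_getElem?_ne_getElem?]
  intro i m him hm heq
  have hy : p[i]? = some p[i] := List.getElem?_eq_getElem (by omega)
  have := hp.le_add_pathLen_of_shortest hd hy (heq ▸ hy) (isWalk_singleton _)
  simp only [pathLen, List.length_singleton] at this
  omega

end Walks

section Detours

variable {V : Type*} {E : V → V → Prop} {v : ℕ → V} {k : ℕ}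

lemma Eres.edel {a : ℕ} (ha : a < k) {y z : V} (h : Eres E v k y z) : Edel E v a y z :=
  ⟨h.1, fun ⟨hy, hz⟩ => h.2 ⟨a, ha, hy, hz⟩⟩

lemma isChain_Eres_take_of_detour {Dt : List V} {j m : ℕ} (hc : Dt.IsChain E) (hnd : Dt.Nodup)
    (hhead : Dt.head? = some (v j))
    (hDonP : ∀ y ∈ Dt, onPath v k y → y = v j ∨ Dt.getLast? = some y) (hm : m < pathLen Dt) :
    (Dt.take (m + 1)).IsChain (Eres E v k) := by
  rw [List.isChain_iff_getElem]
  intro l hl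
  simp only [List.length_take, List.getElem_take] at hl ⊢
  have hl' : l + 1 < Dt.length - 1 := by simp only [pathLen] at hm; omega
  refine ⟨hc.getElem l (by omega), ?_⟩
  rintro ⟨p, hp, -, hz⟩
  rcases hDonP _ (List.getElem_mem _) ⟨p + 1, hp, hz⟩ with h | h
  · rw [List.head?_eq_getElem?, List.getElem?_eq_getElem (by omega), Option.some_inj, ← h,
      hnd.getElem_inj_iff] at hhead
    omega
  · rw [List.getLast?_eq_getElem?, List.getElem?_eq_getElem (by omega), Option.some_inj,
      hnd.getElem_inj_iff] at h
    omega

end Detours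

end RP

theorem stmt4_general {V : Type*}
    (E : V → V → Prop) (k : ℕ)
    (v : ℕ → V) (s t : V)
    (sqn : ℕ)
    (a : ℕ) (ha : a < k)
    (j : ℕ) (hj : j ≤ k)
    (Q Dt Suff : List V)
    (hQrp : RP.IsRP E v s t a Q)
    (hQeq : Q = ((List.range j).map v) ++ Dt ++ Suff.tail)
    (hDhead : Dt.head? = some (v j))
    (hDonP : ∀ y ∈ Dt, RP.onPath v k y → y = v j ∨ Dt.getLast? = some y)
    (hDlen : sqn < RP.pathLen Dt)
    (x : V) (hx : Dt[sqn]? = some x) :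
    RP.dist (RP.Eres E v k) (v j) x = (sqn : ℕ∞) ∧
    x ∈ RP.Vsqrt E v k sqn ∧
    ∀ i < j, (sqn : ℕ∞) < RP.dist (RP.Eres E v k) (v i) x := by
  obtain ⟨hQwalk, hQshort⟩ := hQrp
  have hDlen' : sqn + 1 < Dt.length := by simp only [RP.pathLen] at hDlen; omega
  have hQDt : ∀ m < Dt.length, Q[j + m]? = Dt[m]? := fun m hm => by
    simp [hQeq, List.getElem?_append_right, List.getElem?_append_left, hm]
  have hQv : ∀ i ≤ j, Q[i]? = some (v i) := fun i hi => by
    rcases hi.lt_or_eq with hi | rfl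
    · simp [hQeq, List.getElem?_append_left, hi]
    · simpa [← List.head?_eq_getElem?, hDhead] using hQDt 0 (by omega)
  have hQx : Q[j + sqn]? = some x := (hQDt sqn (by omega)).trans hx
  have hQchain : Q.IsChain (RP.Edel E v a) := hQwalk.2.2.2
  have hDt : Dt <:+: Q := ⟨_, _, hQeq.symm⟩
  have lower : ∀ i ≤ j, ∀ R, RP.IsWalk (RP.Eres E v k) R (v i) x → j + sqn ≤ i + RP.pathLen R :=
    fun i hi R hR => hQwalk.le_add_pathLen_of_shortest hQshort (hQv i hi) hQx
      (hR.mono fun _ _ => RP.Eres.edel ha)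
  have upper : RP.IsWalk (RP.Eres E v k) (Dt.take (sqn + 1)) (v j) x :=
    RP.isWalk_take (RP.isChain_Eres_take_of_detour ((hQchain.infix hDt).imp fun _ _ h => h.1)
      ((hQwalk.nodup_of_shortest hQshort).sublist hDt.sublist) hDhead hDonP hDlen) hDhead hx
  have hdist : RP.dist (RP.Eres E v k) (v j) x = sqn := by
    refine le_antisymm ?_ (RP.le_dist fun R hR => by have := lower j le_rfl R hR; omega)
    have := RP.dist_le_pathLen upper
    rwa [RP.pathLen, List.length_take, show min (sqn + 1) Dt.length - 1 = sqn by omega] at this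
  have hfar : ∀ i < j, (sqn : ℕ∞) < RP.dist (RP.Eres E v k) (v i) x := fun i hi =>
    (ENat.natCast_lt_natCast.mpr sqn.lt_succ_self).trans_le
      (RP.le_dist fun R hR => by have := lower i hi.le R hR; omega)
  exact ⟨hdist, ⟨j, hj, hdist, hfar⟩, hfar⟩

/-- Let `(s,t,e)` (with `e = (v a, v (a+1))`) be a long triple and let
`Q = ⟨v 0, …, v j⟩ ∘ Dt ∘ Suff` be a replacement path for it, where the detour `Dt` starts at
`v j`, meets `P` only in its first and last vertices, and has more than `⌈√n⌉` edges, and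
`Suff` ends at `t`. If `x` is the `(⌈√n⌉+1)`-st vertex along `Dt`, then
`d_{G'}(v j, x) = ⌈√n⌉`, `x ∈ V_{√n}`, and `j = ρ(x)` (i.e., all earlier indices have
`G'`-distance to `x` exceeding `⌈√n⌉`). -/
theorem stmt4 {V : Type*} [Fintype V]
    (E : V → V → Prop) (n k : ℕ) (hn : Fintype.card V = n)
    (v : ℕ → V) (s t : V) (hs : v 0 = s) (ht : v k = t)
    (hPwalk : RP.IsWalk E ((List.range (k + 1)).map v) s t)
    (hPshort : RP.dist E s t = (k : ℕ∞))
    (sqn : ℕ) (hsqn : sqn = ⌈Real.sqrt n⌉₊)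
    (a : ℕ) (ha : a < k) (hlong : RP.LongTriple E v k s t sqn a)
    (j : ℕ) (hj : j ≤ k)
    (Q Dt Suff : List V)
    (hQrp : RP.IsRP E v s t a Q)
    (hQeq : Q = ((List.range j).map v) ++ Dt ++ Suff.tail)
    (hDhead : Dt.head? = some (v j))
    (hDSuff : Dt.getLast? = Suff.head?)
    (hSuffLast : Suff.getLast? = some t)
    (hDonP : ∀ y ∈ Dt, RP.onPath v k y → y = v j ∨ Dt.getLast? = some y)
    (hDlen : sqn < RP.pathLen Dt)
    (x : V) (hx : Dt[sqn]? = some x) :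
    RP.dist (RP.Eres E v k) (v j) x = (sqn : ℕ∞) ∧
    x ∈ RP.Vsqrt E v k sqn ∧
    ∀ i < j, (sqn : ℕ∞) < RP.dist (RP.Eres E v k) (v i) x :=
  stmt4_general E k v s t sqn a ha j hj Q Dt Suff hQrp hQeq hDhead hDonP hDlen x hx
end

section
/- Let 0 ≤ i ≤ k−1 and let x ≠ v_{i+1} be a vertex such that d_{G^w_{i+1}}(s,x) = ε·(i+1) + d_{G'}(v_{i+1}, x) with d_{G'}(v_{i+1},x) finite (i.e., some shortest s-to-x path in G^w_{i+1} consists of the prefix ⟨v_0,…,v_{i+1}⟩ of P followed by a shortest v_{i+1}-to-x path in G'). Then ⌊d_{G^w_i}(s,x)⌋ ≥ ⌊d_{G^w_{i+1}}(s,x)⌋ + 1, where the inequality holds trivially if d_{G^w_i}(s,x) = ∞. -/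
open scoped ENat ENNReal

/-!
Loop erasure turns every `s`-to-`x` walk in `G^w_i` into a simple one of no larger weight, and
that simple walk is also a walk in `G^w_{i+1}`. A simple walk in `G^w_i` can use only the path
edges `(v a, v (a+1))` with `a < i`, each at most once, so its weight is `N + ε c` with `N, c`
natural and `c ≤ i`. Being at least `ε (i+1) + m`, it forces `N ≥ m + 1`. On the other side,
`i + 1 ≤ k < n` because `P` is a shortest path, so `ε (i+1) < 1` and `⌊d_{G^w_{i+1}}(s,x)⌋ = m`.
-/

namespace List

theorem exists_eq_append_cons_append_cons_of_not_nodup {α : Type*} :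
    ∀ {l : List α}, ¬l.Nodup → ∃ a x b c, l = a ++ x :: (b ++ x :: c)
  | [], h => absurd List.nodup_nil h
  | y :: l, h => by
    by_cases hy : y ∈ l
    · obtain ⟨b, c, rfl⟩ := List.append_of_mem hy
      exact ⟨[], y, b, c, rfl⟩
    · obtain ⟨a, x, b, c, rfl⟩ :=
        exists_eq_append_cons_append_cons_of_not_nodup fun hl => h (List.nodup_cons.2 ⟨hy, hl⟩)
      exact ⟨y :: a, x, b, c, rfl⟩

end List

namespace RP

variable {V : Type*}

section Walks

variable {E : V → V → Prop} {Q : List V} {u t : V}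

theorem IsWalk.mono_s7 {E' : V → V → Prop} (h : ∀ a b, E a b → E' a b) (hQ : IsWalk E Q u t) :
    IsWalk E' Q u t :=
  ⟨hQ.1, hQ.2.1, hQ.2.2.1, hQ.2.2.2.imp h⟩

theorem IsWalk.erase_loop {a b c : List V} {x : V}
    (h : IsWalk E (a ++ x :: (b ++ x :: c)) u t) : IsWalk E (a ++ x :: c) u t := by
  obtain ⟨-, hhead, hlast, hchain⟩ := h
  refine ⟨by simp, ?_, ?_, ?_⟩
  · rw [← hhead]; cases a <;> simp
  · rw [← hlast, List.getLast?_append_cons, ← List.cons_append, ← List.append_assoc,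
      List.getLast?_append_cons]
  · rw [List.Chain', List.isChain_split] at hchain ⊢
    obtain ⟨hprefix, hloop⟩ := hchain
    rw [← List.cons_append, List.isChain_split] at hloop
    exact ⟨hprefix, hloop.2⟩

theorem wt_nonneg {w : V → V → ℝ} (hw : ∀ a b, 0 ≤ w a b) : ∀ Q : List V, 0 ≤ wt w Q
  | [] => le_rfl
  | [_] => le_rfl
  | a :: b :: rest => add_nonneg (hw a b) (wt_nonneg hw (b :: rest))

theorem wt_append_cons (w : V → V → ℝ) :
    ∀ (a : List V) (x : V) (b : List V), wt w (a ++ x :: b) = wt w (a ++ [x]) + wt w (x :: b)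
  | [], _, _ => by simp [wt]
  | [_], _, _ => by simp [wt]
  | y :: z :: a, x, b => by
    have ih := wt_append_cons w (z :: a) x b
    simp only [List.cons_append] at ih ⊢
    rw [wt, wt, ih, add_assoc]

theorem wt_erase_loop_le {w : V → V → ℝ} (hw : ∀ a b, 0 ≤ w a b) (a b c : List V) (x : V) :
    wt w (a ++ x :: c) ≤ wt w (a ++ x :: (b ++ x :: c)) := by
  rw [wt_append_cons w a x c, wt_append_cons w a x (b ++ x :: c), ← List.cons_append,
    wt_append_cons w (x :: b) x c]
  linarith [wt_nonneg hw ((x :: b) ++ [x])]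

theorem IsWalk.exists_nodup (hQ : IsWalk E Q u t) :
    ∃ Q', IsWalk E Q' u t ∧ Q'.Nodup ∧
      ∀ w : V → V → ℝ, (∀ a b, 0 ≤ w a b) → wt w Q' ≤ wt w Q := by
  induction hlen : Q.length using Nat.strong_induction_on generalizing Q with
  | _ N ih =>
    by_cases hnd : Q.Nodup
    · exact ⟨Q, hQ, hnd, fun _ _ => le_rfl⟩
    obtain ⟨a, x, b, c, rfl⟩ := List.exists_eq_append_cons_append_cons_of_not_nodup hnd
    obtain ⟨Q', hQ'walk, hQ'nd, hQ'wt⟩ :=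
      ih _ (by simp [← hlen]) hQ.erase_loop rfl
    exact ⟨Q', hQ'walk, hQ'nd, fun w hw => (hQ'wt w hw).trans (wt_erase_loop_le hw a b c x)⟩

theorem dist_lt_card [Fintype V] (hQ : IsWalk E Q u t) : dist E u t < Fintype.card V := by
  obtain ⟨Q', hQ'walk, hQ'nd, -⟩ := hQ.exists_nodup
  have hlen : Q'.length ≤ Fintype.card V := hQ'nd.length_le_card
  have hpos : 0 < Q'.length := List.length_pos_iff.2 hQ'walk.1
  calc dist E u t ≤ pathLen Q' := sInf_le ⟨Q', hQ'walk, rfl⟩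
    _ < Fintype.card V := by unfold pathLen; exact_mod_cast (by omega)

theorem wdist_le_ofReal_wt {w : V → V → ℝ} (hQ : IsWalk E Q u t) :
    wdist E w u t ≤ ENNReal.ofReal (wt w Q) :=
  sInf_le ⟨Q, hQ, rfl⟩

theorem ofReal_le_wdist {w : V → V → ℝ} {r : ℝ}
    (h : ∀ Q, IsWalk E Q u t → r ≤ wt w Q) : ENNReal.ofReal r ≤ wdist E w u t :=
  le_sInf <| by
    rintro _ ⟨Q, hQ, rfl⟩
    exact ENNReal.ofReal_le_ofReal (h Q hQ)

theorem le_wt_of_ofReal_le_wdist {w : V → V → ℝ} (hw : ∀ a b, 0 ≤ w a b) {r : ℝ}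
    (h : ENNReal.ofReal r ≤ wdist E w u t) (hQ : IsWalk E Q u t) : r ≤ wt w Q :=
  (ENNReal.ofReal_le_ofReal_iff (wt_nonneg hw Q)).1 (h.trans (wdist_le_ofReal_wt hQ))

end Walks

section PathWeights

variable {E : V → V → Prop} {v : ℕ → V} {k i : ℕ} {ε : ℝ}

theorem Ei_succ_of_Ei {a b : V} (h : Ei E v k i a b) : Ei E v k (i + 1) a b := by
  obtain ⟨hE, ha, hb⟩ := h
  exact ⟨hE, fun ⟨l, hl, hlk, hx⟩ => ha ⟨l, by omega, hlk, hx⟩,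
    fun ⟨l, hl, hlk, hx⟩ => hb ⟨l, by omega, hlk, hx⟩⟩

theorem wP_nonneg (hε : 0 ≤ ε) (a b : V) : 0 ≤ wP v k ε a b := by
  unfold wP; split <;> linarith

/-- `S` collects the indices `a` of the path edges `(v a, v (a+1))` the walk uses; they are
distinct because the walk is simple, and `a < i` because `v (i+1), …, v k` are deleted. -/
theorem exists_wt_wP_eq_of_nodup :
    ∀ {Q : List V}, Q.IsChain (Ei E v k i) → Q.Nodup →
      ∃ (N : ℕ) (S : Finset ℕ), S ⊆ Finset.range i ∧ (∀ a ∈ S, v a ∈ Q) ∧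
        wt (wP v k ε) Q = N + ε * S.card
  | [], _, _ => ⟨0, ∅, by simp, by simp, by simp [wt]⟩
  | [_], _, _ => ⟨0, ∅, by simp, by simp, by simp [wt]⟩
  | y :: z :: Q, hchain, hnd => by
    obtain ⟨hyz, hchain'⟩ := List.isChain_cons_cons.1 hchain
    obtain ⟨hy, hnd'⟩ := List.nodup_cons.1 hnd
    obtain ⟨N, S, hSi, hSQ, hwt⟩ := exists_wt_wP_eq_of_nodup hchain' hnd'
    have hwt_cons : wt (wP v k ε) (y :: z :: Q) = wP v k ε y z + wt (wP v k ε) (z :: Q) := rfl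
    by_cases hP : ∃ a, a < k ∧ y = v a ∧ z = v (a + 1)
    · obtain ⟨a, hak, rfl, rfl⟩ := hP
      have hai : a < i := by
        by_contra! hia
        exact hyz.2.2 ⟨a + 1, by omega, hak, rfl⟩
      have haS : a ∉ S := fun ha => hy (hSQ a ha)
      refine ⟨N, insert a S, Finset.insert_subset (Finset.mem_range.2 hai) hSi, ?_, ?_⟩
      · intro b hb
        rcases Finset.mem_insert.1 hb with rfl | hb
        · exact List.mem_cons_self
        · exact List.mem_cons_of_mem _ (hSQ b hb)
      · rw [hwt_cons, hwt, Finset.card_insert_of_notMem haS, wP, if_pos ⟨a, hak, rfl, rfl⟩]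
        push_cast; ring
    · refine ⟨N + 1, S, hSi, fun b hb => List.mem_cons_of_mem _ (hSQ b hb), ?_⟩
      rw [hwt_cons, hwt, wP, if_neg hP]
      push_cast; ring

theorem exists_wt_wP_eq_natCast_add {Q : List V} (hchain : Q.IsChain (Ei E v k i))
    (hnd : Q.Nodup) : ∃ N c : ℕ, c ≤ i ∧ wt (wP v k ε) Q = N + ε * c := by
  obtain ⟨N, S, hSi, -, hwt⟩ := exists_wt_wP_eq_of_nodup hchain hnd
  exact ⟨N, S.card, by simpa using Finset.card_le_card hSi, hwt⟩

theorem add_one_le_wt_of_forall_le_wt {s x : V} {m : ℕ} (hε : 0 < ε)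
    (hsucc : ∀ Q, IsWalk (Ei E v k (i + 1)) Q s x → ε * ((i : ℝ) + 1) + m ≤ wt (wP v k ε) Q)
    {Q : List V} (hQ : IsWalk (Ei E v k i) Q s x) : (m : ℝ) + 1 ≤ wt (wP v k ε) Q := by
  obtain ⟨Q', hQ'walk, hQ'nd, hQ'wt⟩ := hQ.exists_nodup
  obtain ⟨N, c, hci, hwt⟩ := exists_wt_wP_eq_natCast_add hQ'walk.2.2.2 hQ'nd
  have hlower := hsucc Q' (hQ'walk.mono_s7 fun _ _ => Ei_succ_of_Ei)
  have hci' : (c : ℝ) ≤ i := by exact_mod_cast hci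
  have hmN : m < N := by
    have : (m : ℝ) < N := by rw [hwt] at hlower; nlinarith
    exact_mod_cast this
  have hmN' : (m : ℝ) + 1 ≤ N := by exact_mod_cast hmN
  calc (m : ℝ) + 1 ≤ N + ε * c := le_add_of_le_of_nonneg hmN' (by positivity)
    _ = wt (wP v k ε) Q' := hwt.symm
    _ ≤ wt (wP v k ε) Q := hQ'wt _ (wP_nonneg hε.le)

end PathWeights

end RP

theorem stmt7_general {V : Type*} [Fintype V]
    (E : V → V → Prop) (n k : ℕ) (hn : Fintype.card V = n)
    (v : ℕ → V) (s t : V)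
    (hPwalk : RP.IsWalk E ((List.range (k + 1)).map v) s t)
    (hPshort : RP.dist E s t = (k : ℕ∞))
    (ε : ℝ) (hε0 : 0 < ε) (hε1 : ε < 1 / n)
    (i : ℕ) (hik : i + 1 ≤ k)
    (x : V)
    (m : ℕ)
    (hdx : RP.wdist (RP.Ei E v k (i + 1)) (RP.wP v k ε) s x =
      ENNReal.ofReal (ε * ((i : ℝ) + 1) + (m : ℝ))) :
    RP.wdist (RP.Ei E v k i) (RP.wP v k ε) s x = ⊤ ∨
    ⌊(RP.wdist (RP.Ei E v k (i + 1)) (RP.wP v k ε) s x).toReal⌋ + 1 ≤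
      ⌊(RP.wdist (RP.Ei E v k i) (RP.wP v k ε) s x).toReal⌋ := by
  have hkn : k < n := by
    have := RP.dist_lt_card hPwalk
    rwa [hPshort, hn, Nat.cast_lt] at this
  have hεi : ε * ((i : ℝ) + 1) < 1 := by
    have hin : (i : ℝ) + 1 < n := by exact_mod_cast (by omega : i + 1 < n)
    have hn0 : (0 : ℝ) < n := by exact_mod_cast (by omega : 0 < n)
    calc ε * ((i : ℝ) + 1) ≤ ε * n := by gcongr
      _ < 1 / n * n := by gcongr
      _ = 1 := one_div_mul_cancel hn0.ne'
  have hfloor_succ : ⌊(RP.wdist (RP.Ei E v k (i + 1)) (RP.wP v k ε) s x).toReal⌋ = m := by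
    rw [hdx, ENNReal.toReal_ofReal (by positivity), Int.floor_eq_iff]
    constructor <;> push_cast <;> nlinarith
  refine or_iff_not_imp_left.2 fun htop => ?_
  have hge : ENNReal.ofReal ((m : ℝ) + 1) ≤ RP.wdist (RP.Ei E v k i) (RP.wP v k ε) s x :=
    RP.ofReal_le_wdist fun _ hQ => RP.add_one_le_wt_of_forall_le_wt hε0
      (fun _ => RP.le_wt_of_ofReal_le_wdist (RP.wP_nonneg hε0.le) hdx.ge) hQ
  have hge_real := ENNReal.toReal_mono htop hge
  rw [ENNReal.toReal_ofReal (by positivity)] at hge_real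
  rw [hfloor_succ, Int.le_floor]
  exact_mod_cast hge_real

/-- Let `0 ≤ i ≤ k−1` and let `x ≠ v (i+1)` be a vertex such that
`d_{G^w_{i+1}}(s,x) = ε·(i+1) + d_{G'}(v (i+1), x)` with `d_{G'}(v (i+1), x) = m` finite.
Then `⌊d_{G^w_i}(s,x)⌋ ≥ ⌊d_{G^w_{i+1}}(s,x)⌋ + 1` (trivially, if `d_{G^w_i}(s,x) = ∞`). -/
theorem stmt7 {V : Type*} [Fintype V]
    (E : V → V → Prop) (n k : ℕ) (hn : Fintype.card V = n)
    (v : ℕ → V) (s t : V) (hs : v 0 = s) (ht : v k = t)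
    (hPwalk : RP.IsWalk E ((List.range (k + 1)).map v) s t)
    (hPshort : RP.dist E s t = (k : ℕ∞))
    (ε : ℝ) (hε0 : 0 < ε) (hε1 : ε < 1 / n)
    (i : ℕ) (hik : i + 1 ≤ k)
    (x : V) (hxne : x ≠ v (i + 1))
    (m : ℕ) (hm : RP.dist (RP.Eres E v k) (v (i + 1)) x = (m : ℕ∞))
    (hdx : RP.wdist (RP.Ei E v k (i + 1)) (RP.wP v k ε) s x =
      ENNReal.ofReal (ε * ((i : ℝ) + 1) + (m : ℝ))) :
    RP.wdist (RP.Ei E v k i) (RP.wP v k ε) s x = ⊤ ∨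
    ⌊(RP.wdist (RP.Ei E v k (i + 1)) (RP.wP v k ε) s x).toReal⌋ + 1 ≤
      ⌊(RP.wdist (RP.Ei E v k i) (RP.wP v k ε) s x).toReal⌋ :=
  stmt7_general E n k hn v s t hPwalk hPshort ε hε0 hε1 i hik x m hdx
end
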